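/- arXiv:0711.4034 — 3 statements merged into one kernel-verified Lean document; each statement's English description precedes it below -/
import Mathlib

section
/- Let A, B ∈ GL_n(ℂ) be block upper triangular matrices with identity diagonal blocks (block sizes r₁,…,r_k), and set C = A − B. Then C is strictly block upper triangular, and for indices i < k, the (i,k) block of log(B⁻¹A) = Σ_{p≥1} (−1)^{p−1}(B⁻¹C)^p/p equals C_{i,k} plus a sum Σ_{i<j<k} M_{i,j,k} C_{j,k} for some matrices M_{i,j,k} depending only on A and B. -/
set_option linter.unusedSectionVars false

open Finset

section Aux

variable {m : Type*} [Fintype m] [DecidableEq m]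

/-- block upper triangular w.r.t. grading `g` -/
def IsBUaux (g : m → ℕ) (X : Matrix m m ℂ) : Prop := ∀ i j, g j < g i → X i j = 0

/-- strictly block upper triangular w.r.t. grading `g` -/
def IsSUaux (g : m → ℕ) (X : Matrix m m ℂ) : Prop := ∀ i j, g j ≤ g i → X i j = 0

theorem IsSUaux.isBU {g : m → ℕ} {X : Matrix m m ℂ} (h : IsSUaux g X) : IsBUaux g X :=
  fun i j hij => h i j hij.le

theorem IsBUaux.mul_isSU {g : m → ℕ} {X Y : Matrix m m ℂ} (hX : IsBUaux g X)
    (hY : IsSUaux g Y) : IsSUaux g (X * Y) := by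
  intro i j hij
  rw [Matrix.mul_apply]
  refine Finset.sum_eq_zero fun t _ => ?_
  rcases lt_or_ge (g t) (g i) with h | h
  · rw [hX i t h, zero_mul]
  · rw [hY t j (hij.trans h), mul_zero]

theorem IsSUaux.mul_isBU {g : m → ℕ} {X Y : Matrix m m ℂ} (hX : IsSUaux g X)
    (hY : IsBUaux g Y) : IsSUaux g (X * Y) := by
  intro i j hij
  rw [Matrix.mul_apply]
  refine Finset.sum_eq_zero fun t _ => ?_
  rcases le_or_gt (g t) (g i) with h | h
  · rw [hX i t h, zero_mul]
  · rw [hY t j (lt_of_le_of_lt hij h), mul_zero]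

theorem IsSUaux.add {g : m → ℕ} {X Y : Matrix m m ℂ} (hX : IsSUaux g X)
    (hY : IsSUaux g Y) : IsSUaux g (X + Y) := fun i j h => by
  simp [Matrix.add_apply, hX i j h, hY i j h]

theorem IsSUaux.smul {g : m → ℕ} {X : Matrix m m ℂ} (hX : IsSUaux g X) (c : ℂ) :
    IsSUaux g (c • X) := fun i j h => by
  simp [Matrix.smul_apply, hX i j h]

theorem IsSUaux.neg {g : m → ℕ} {X : Matrix m m ℂ} (hX : IsSUaux g X) :
    IsSUaux g (-X) := fun i j h => by
  simp [Matrix.neg_apply, hX i j h]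

theorem IsSUaux.sum {g : m → ℕ} {α : Type*} {s : Finset α} {f : α → Matrix m m ℂ}
    (h : ∀ a ∈ s, IsSUaux g (f a)) : IsSUaux g (∑ a ∈ s, f a) := fun i j hij => by
  rw [Matrix.sum_apply]
  exact Finset.sum_eq_zero fun a ha => h a ha i j hij

theorem IsSUaux.pow {g : m → ℕ} {X : Matrix m m ℂ} (hX : IsSUaux g X) {p : ℕ}
    (hp : 1 ≤ p) : IsSUaux g (X ^ p) := by
  obtain ⟨q, rfl⟩ := Nat.exists_eq_add_of_le hp
  clear hp
  induction q with
  | zero => simpa using hX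
  | succ n ih =>
    rw [show 1 + (n + 1) = (1 + n) + 1 by omega, pow_succ]
    exact ih.mul_isBU hX.isBU

theorem IsSUaux.pow_entry_eq_zero {g : m → ℕ} {X : Matrix m m ℂ} (hX : IsSUaux g X) :
    ∀ (p : ℕ) (i j : m), g j < g i + p → (X ^ p) i j = 0 := by
  intro p
  induction p with
  | zero =>
    intro i j h
    rw [pow_zero]
    exact Matrix.one_apply_ne (fun e => by subst e; omega)
  | succ n ih =>
    intro i j h
    rw [pow_succ', Matrix.mul_apply]
    refine Finset.sum_eq_zero fun t _ => ?_
    rcases le_or_gt (g t) (g i) with ht | ht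
    · rw [hX i t ht, zero_mul]
    · rw [ih t j (by omega), mul_zero]

theorem IsSUaux.pow_eq_zero {g : m → ℕ} {X : Matrix m m ℂ} (hX : IsSUaux g X) {k : ℕ}
    (hg : ∀ x, g x ≤ k) : X ^ (k + 1) = 0 := by
  ext i j
  rw [Matrix.zero_apply]
  exact hX.pow_entry_eq_zero (k + 1) i j (by have := hg j; omega)

end Aux


open Finset in
/-- `log(I + N) = Σ_{p≥1} (−1)^{p−1} N^p / p`, truncated at the size of the matrix. -/
noncomputable def matrixLogOneAdd {m : Type*} [Fintype m] [DecidableEq m]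
    (N : Matrix m m ℂ) : Matrix m m ℂ :=
  ∑ p ∈ Finset.Icc 1 (Fintype.card m), ((-1 : ℂ) ^ (p - 1) / (p : ℂ)) • N ^ p

/-- Lemma "CHfaible": if `A, B` are block upper triangular with identity diagonal blocks
(block sizes `r₀,…,r_k`) and `C = A − B`, then `C` is strictly block upper triangular and,
for `i` below the last block index, the `(i, last)` block of `log(B⁻¹ A)` equals
`C_{i,last} + Σ_{i<j<last} M_{i,j} C_{j,last}` for some matrices `M` depending only on
`A` and `B`. -/
theorem log_block_formula (k : ℕ) (r : Fin (k + 1) → ℕ)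
    (A B : Matrix ((p : Fin (k + 1)) × Fin (r p)) ((p : Fin (k + 1)) × Fin (r p)) ℂ)
    (hA : ∀ i j : (p : Fin (k + 1)) × Fin (r p),
      (j.1 < i.1 → A i j = 0) ∧ (i.1 = j.1 → A i j = if i = j then 1 else 0))
    (hB : ∀ i j : (p : Fin (k + 1)) × Fin (r p),
      (j.1 < i.1 → B i j = 0) ∧ (i.1 = j.1 → B i j = if i = j then 1 else 0)) :
    (∀ i j : (p : Fin (k + 1)) × Fin (r p), j.1 ≤ i.1 → (A - B) i j = 0) ∧
    ∃ M : (p : Fin (k + 1)) → (q : Fin (k + 1)) → Matrix (Fin (r p)) (Fin (r q)) ℂ,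
      ∀ i : Fin (k + 1), i < Fin.last k →
        ∀ (a : Fin (r i)) (c : Fin (r (Fin.last k))),
          matrixLogOneAdd (B⁻¹ * A - 1) ⟨i, a⟩ ⟨Fin.last k, c⟩ =
            (A - B) ⟨i, a⟩ ⟨Fin.last k, c⟩ +
            ∑ j ∈ Finset.Ioo i (Fin.last k),
              ∑ x : Fin (r j), M i j a x * (A - B) ⟨j, x⟩ ⟨Fin.last k, c⟩ := by
  classical
  set g : ((p : Fin (k + 1)) × Fin (r p)) → ℕ := fun x => (x.1 : ℕ) with hg
  -- C = A - B is strictly block upper triangular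
  have hC : IsSUaux g (A - B) := by
    intro i j hij
    rw [Matrix.sub_apply]
    rcases lt_or_eq_of_le hij with h | h
    · rw [(hA i j).1 (Fin.lt_def.mpr h), (hB i j).1 (Fin.lt_def.mpr h), sub_zero]
    · have hfst : i.1 = j.1 := Fin.val_injective h.symm
      rw [(hA i j).2 hfst, (hB i j).2 hfst, sub_self]
  -- B is block upper triangular with B - 1 strictly upper
  have hBU_B : IsBUaux g B := fun i j h => (hB i j).1 (Fin.lt_def.mpr h)
  have hM0 : IsSUaux g (B - 1) := by
    intro i j hij
    rw [Matrix.sub_apply]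
    rcases lt_or_eq_of_le hij with h | h
    · rw [(hB i j).1 (Fin.lt_def.mpr h), Matrix.one_apply_ne (fun e => by subst e; omega),
        sub_zero]
    · have hfst : i.1 = j.1 := Fin.val_injective h.symm
      rw [(hB i j).2 hfst, Matrix.one_apply, sub_self]
  have hgk : ∀ x : (p : Fin (k + 1)) × Fin (r p), g x ≤ k := fun x => Fin.is_le x.1
  have hnil : (B - 1) ^ (k + 1) = 0 := hM0.pow_eq_zero hgk
  -- explicit inverse of B
  set E := ∑ p ∈ Finset.range (k + 2), (-(B - 1)) ^ p with hE
  have hEB : E * B = 1 := by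
    have h := geom_sum_mul (-(B - 1)) (k + 2)
    have h2 : (-(B - 1)) ^ (k + 2) = 0 := by
      have h0 : (B - 1) ^ (k + 2) = 0 := by rw [pow_succ, hnil, zero_mul]
      rw [neg_pow, h0, mul_zero]
    have h3 : -(B - 1) - 1 = -B := by abel
    rw [h2, h3, mul_neg, zero_sub] at h
    exact neg_injective h
  have hBinv : B⁻¹ = E := Matrix.inv_eq_left_inv hEB
  have hE1 : IsSUaux g (E - 1) := by
    have hE' : E = (∑ p ∈ Finset.range (k + 1), (-(B - 1)) ^ (p + 1)) + 1 := by
      rw [hE, Finset.sum_range_succ', pow_zero]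
    rw [hE', add_sub_cancel_right]
    exact IsSUaux.sum fun p _ => hM0.neg.pow (Nat.succ_le_succ (Nat.zero_le p))
  have hSU_Binv1 : IsSUaux g (B⁻¹ - 1) := by rw [hBinv]; exact hE1
  have hBU_Binv : IsBUaux g B⁻¹ := by
    intro i j h
    have h1 := hSU_Binv1 i j h.le
    have h2 : (1 : Matrix ((p : Fin (k + 1)) × Fin (r p)) ((p : Fin (k + 1)) × Fin (r p)) ℂ)
        i j = 0 := Matrix.one_apply_ne (fun e => by subst e; omega)
    rw [Matrix.sub_apply, h2, sub_zero] at h1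
    exact h1
  have hBinvB : B⁻¹ * B = 1 := by rw [hBinv]; exact hEB
  set N := B⁻¹ * A - 1 with hNdef
  have hN : N = B⁻¹ * (A - B) := by rw [hNdef, Matrix.mul_sub, hBinvB]
  have hSU_N : IsSUaux g N := hN ▸ hBU_Binv.mul_isSU hC
  set n := Fintype.card ((p : Fin (k + 1)) × Fin (r p)) with hn
  set Q := ∑ p ∈ Finset.Icc 2 n, ((-1 : ℂ) ^ (p - 1) / (p : ℂ)) • N ^ (p - 1) with hQ
  have hSU_Q : IsSUaux g Q :=
    IsSUaux.sum fun p hp =>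
      (hSU_N.pow (by rw [Finset.mem_Icc] at hp; omega)).smul _
  set S := (B⁻¹ - 1) + Q * B⁻¹ with hS
  have hSU_S : IsSUaux g S := hSU_Binv1.add (hSU_Q.mul_isBU hBU_Binv)
  refine ⟨fun i j h => hC i j h, fun p q => Matrix.of fun a x => S ⟨p, a⟩ ⟨q, x⟩, ?_⟩
  intro i hi a c
  have hn1 : 1 ≤ n := by rw [hn]; exact Fintype.card_pos_iff.mpr ⟨⟨i, a⟩⟩
  have hsplit : Finset.Icc 1 n = insert 1 (Finset.Icc 2 n) := by
    ext p; simp only [Finset.mem_Icc, Finset.mem_insert]; omega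
  have hQN : (∑ p ∈ Finset.Icc 2 n, ((-1 : ℂ) ^ (p - 1) / (p : ℂ)) • N ^ p) = Q * N := by
    rw [hQ, Finset.sum_mul]
    refine Finset.sum_congr rfl fun p hp => ?_
    rw [Finset.mem_Icc] at hp
    rw [smul_mul_assoc, ← pow_succ, Nat.sub_add_cancel (by omega)]
  have key : matrixLogOneAdd N = (A - B) + S * (A - B) := by
    have h1 : matrixLogOneAdd N = N + Q * N := by
      simp only [matrixLogOneAdd]
      rw [← hn, hsplit, Finset.sum_insert (by simp [Finset.mem_Icc]), hQN]
      norm_num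
    rw [h1, hN, hS]
    noncomm_ring
  rw [key, Matrix.add_apply]
  congr 1
  have hsig := Finset.sum_sigma (Finset.univ : Finset (Fin (k + 1)))
    (fun p => (Finset.univ : Finset (Fin (r p))))
    (fun t => S ⟨i, a⟩ t * (A - B) t ⟨Fin.last k, c⟩)
  rw [Finset.univ_sigma_univ] at hsig
  rw [Matrix.mul_apply, hsig]
  have h0 : ∀ j ∈ (Finset.univ : Finset (Fin (k + 1))), j ∉ Finset.Ioo i (Fin.last k) →
      (∑ x : Fin (r j), S ⟨i, a⟩ ⟨j, x⟩ * (A - B) ⟨j, x⟩ ⟨Fin.last k, c⟩) = 0 := by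
    intro j _ hj
    rw [Finset.mem_Ioo] at hj
    push_neg at hj
    refine Finset.sum_eq_zero fun x _ => ?_
    rcases lt_or_ge i j with hij | hij
    · have hjl : j = Fin.last k := le_antisymm (Fin.le_last j) (hj hij)
      rw [hC ⟨j, x⟩ ⟨Fin.last k, c⟩ (by simp [hg, hjl]), mul_zero]
    · rw [show S ⟨i, a⟩ ⟨j, x⟩ = 0 from hSU_S _ _ (by simpa [hg] using hij), zero_mul]
  exact (Finset.sum_subset (Finset.subset_univ _) h0).symm
end

section
/- With 𝔤 and 𝔤^{≥δ} as above, let M = I_n + M' with M' ∈ 𝔤 (so M unipotent) and let N ∈ 𝔤^{≥δ}. Then log(M+N) − log(M) − N ∈ 𝔤^{≥δ}, and moreover the components of log(M+N) and log(M)+N agree in all levels < δ and at level δ. -/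
section Aux

variable {k : ℕ} {r : Fin k → ℕ}

local notation "Mx" => Matrix ((p : Fin k) × Fin (r p)) ((p : Fin k) × Fin (r p)) ℂ

/-- Membership in the level-`≥ d` part of the filtration. -/
def MemLvl (μ : Fin k → ℤ) (d : ℤ) (A : Mx) : Prop :=
  ∀ i j : (p : Fin k) × Fin (r p), μ j.1 - μ i.1 < d → A i j = 0

variable {μ : Fin k → ℤ}

lemma MemLvl.mono {d e : ℤ} (h : e ≤ d) {A : Mx} (hA : MemLvl μ d A) : MemLvl μ e A :=
  fun i j hij => hA i j (lt_of_lt_of_le hij h)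

lemma MemLvl.add {d : ℤ} {A B : Mx} (hA : MemLvl μ d A) (hB : MemLvl μ d B) :
    MemLvl μ d (A + B) := fun i j h => by
  simp [Matrix.add_apply, hA i j h, hB i j h]

lemma MemLvl.smul {d : ℤ} (c : ℂ) {A : Mx} (hA : MemLvl μ d A) : MemLvl μ d (c • A) :=
  fun i j h => by simp [Matrix.smul_apply, hA i j h]

lemma MemLvl.mul {a b : ℤ} {A B : Mx} (hA : MemLvl μ a A) (hB : MemLvl μ b B) :
    MemLvl μ (a + b) (A * B) := by
  intro i j hij
  rw [Matrix.mul_apply]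
  refine Finset.sum_eq_zero fun x _ => ?_
  by_cases hx : μ x.1 - μ i.1 < a
  · rw [hA i x hx, zero_mul]
  · rw [hB x j (by omega), mul_zero]

lemma MemLvl.pow {A : Mx} (hA : MemLvl μ 1 A) :
    ∀ p : ℕ, 1 ≤ p → MemLvl μ (p : ℤ) (A ^ p) := by
  intro p hp
  induction p with
  | zero => exact absurd hp (by omega)
  | succ n ih =>
    rcases Nat.lt_or_ge n 1 with h | h
    · interval_cases n
      simpa using hA
    · rw [pow_succ]
      have := (ih h).mul hA
      refine this.mono (by push_cast; omega)

lemma MemLvl.sum {d : ℤ} {α : Type*} {s : Finset α} {f : α → Mx}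
    (h : ∀ x ∈ s, MemLvl μ d (f x)) : MemLvl μ d (∑ x ∈ s, f x) := fun i j hij => by
  rw [Matrix.sum_apply]
  exact Finset.sum_eq_zero fun x hx => h x hx i j hij

lemma diff_pow_mem {δ : ℤ} (hδ : 1 ≤ δ) {M' N : Mx}
    (hM' : MemLvl μ 1 M') (hN : MemLvl μ δ N) :
    ∀ p : ℕ, 1 ≤ p → MemLvl μ (δ + p - 1) ((M' + N) ^ p - M' ^ p) := by
  intro p hp
  induction p with
  | zero => exact absurd hp (by omega)
  | succ n ih =>
    rcases Nat.lt_or_ge n 1 with h | h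
    · interval_cases n
      have : (M' + N) ^ 1 - M' ^ 1 = N := by simp [pow_one]
      rw [this]
      exact hN.mono (by push_cast; omega)
    · have key : (M' + N) ^ (n + 1) - M' ^ (n + 1)
          = ((M' + N) ^ n - M' ^ n) * (M' + N) + M' ^ n * N := by
        rw [pow_succ, pow_succ]; noncomm_ring
      rw [key]
      have h1 : MemLvl μ ((δ + n - 1) + 1) (((M' + N) ^ n - M' ^ n) * (M' + N)) :=
        (ih h).mul (hM'.add (hN.mono hδ))
      have h2 : MemLvl μ ((n : ℤ) + δ) (M' ^ n * N) := (hM'.pow n h).mul hN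
      exact ((h1.mono (by push_cast; omega)).add (h2.mono (by push_cast; omega)))

end Aux

/-- Let `M = I + M'` with `M'` strictly block upper triangular (levels `≥ 1`) and
`N ∈ 𝔤^{≥δ}` (levels `≥ δ`, `δ ≥ 1`). Then `log(M + N) ≡ log(M) + N (mod 𝔤^{≥δ+1})`:
the components of `log(M+N)` and `log(M)+N` agree in all levels `≤ δ`. -/
theorem log_perturbation_mod_higher_levels (k : ℕ) (r : Fin k → ℕ) (μ : Fin k → ℤ)
    (hμ : StrictMono μ) (δ : ℤ) (hδ : 1 ≤ δ)
    (M' N : Matrix ((p : Fin k) × Fin (r p)) ((p : Fin k) × Fin (r p)) ℂ)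
    (hM' : ∀ i j : (p : Fin k) × Fin (r p), μ j.1 - μ i.1 < 1 → M' i j = 0)
    (hN : ∀ i j : (p : Fin k) × Fin (r p), μ j.1 - μ i.1 < δ → N i j = 0) :
    ∀ i j : (p : Fin k) × Fin (r p), μ j.1 - μ i.1 ≤ δ →
      (matrixLogOneAdd (M' + N) - matrixLogOneAdd M' - N) i j = 0 := by
  intro i j hij
  have hne : Nonempty ((p : Fin k) × Fin (r p)) := ⟨i⟩
  have hcard : 1 ≤ Fintype.card ((p : Fin k) × Fin (r p)) := Fintype.card_pos
  set n := Fintype.card ((p : Fin k) × Fin (r p)) with hn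
  have hsplit : matrixLogOneAdd (M' + N) - matrixLogOneAdd M' - N
      = ∑ p ∈ Finset.Icc 2 n,
          ((-1 : ℂ) ^ (p - 1) / (p : ℂ)) • ((M' + N) ^ p - M' ^ p) := by
    unfold matrixLogOneAdd
    rw [← Finset.sum_sub_distrib]
    have hins : Finset.Icc 1 n = insert 1 (Finset.Icc 2 n) := by
      ext x; simp [Finset.mem_Icc, Finset.mem_insert]; omega
    rw [hins, Finset.sum_insert (by simp)]
    simp only [smul_sub]
    rw [Finset.sum_sub_distrib]
    simp [pow_one]
  have hmem : MemLvl μ (δ + 1) (matrixLogOneAdd (M' + N) - matrixLogOneAdd M' - N) := by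
    rw [hsplit]
    refine MemLvl.sum fun p hp => ?_
    have hp2 : 2 ≤ p := (Finset.mem_Icc.mp hp).1
    refine MemLvl.smul _ ((diff_pow_mem hδ hM' hN p (by omega)).mono ?_)
    push_cast; omega
  exact hmem i j (by omega)
end

section
/- Let A ∈ GL_r(ℂ) be semisimple with all eigenvalues in the fundamental annulus {z : 1 ≤ |z| < |q|} (|q| > 1), and let X ∈ ℂ^r be such that γ(A) X = X for every group homomorphism γ : ℂ* → ℂ* with γ(q) = 1 (where γ(A) acts by applying γ to the eigenvalues of A in a fixed diagonalisation). Then A X = X. -/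
/-!
Put `Y = P⁻¹ X`; then `γ(A) X = X` says `γ(cᵢ) Yᵢ = Yᵢ` for every `i`. If `Yᵢ ≠ 0`, every
character of `ℂˣ` trivial on `q` kills `cᵢ`. Since `ℂˣ` contains `ℚ/ℤ` (via `x ↦ exp (2πix)`) and
`ℚ/ℤ`-valued characters separate the points of any abelian group, applied to `ℂˣ / q^ℤ`, this forces
`cᵢ ∈ q^ℤ`; but `q^ℤ` meets the annulus `1 ≤ |z| < |q|` only in `1`. So `cᵢ Yᵢ = Yᵢ` for all `i`.
-/

open Matrix

noncomputable def AddCircle.ratExpUnits : AddCircle (1 : ℚ) →+ Additive ℂˣ :=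
  QuotientAddGroup.lift _
    (Circle.toUnits.toAdditive.comp <| Circle.expHom.comp <|
      (AddMonoidHom.mulLeft (2 * Real.pi)).comp (Rat.castHom ℝ).toAddMonoidHom)
    (AddSubgroup.zmultiples_le.2 <| by simp)

theorem AddCircle.injective_ratExpUnits : Function.Injective AddCircle.ratExpUnits := by
  refine (injective_iff_map_eq_zero _).2 fun y hy => ?_
  induction y using QuotientAddGroup.induction_on with
  | H x =>
    have hx : Circle.exp (2 * Real.pi * x) = 1 :=
      Circle.coe_eq_one.1 (congrArg Units.val (Additive.ofMul.injective hy))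
    obtain ⟨n, hn⟩ := Circle.exp_eq_one.1 hx
    have hxn : (x : ℝ) = n := by nlinarith [Real.pi_pos]
    have hnx : (n : ℚ) = x := by exact_mod_cast hxn.symm
    exact (AddCircle.coe_eq_zero_iff 1).2 ⟨n, by simpa using hnx⟩

theorem exists_monoidHom_units_complex_apply_ne_one {G : Type*} [CommGroup G] {g : G}
    (hg : g ≠ 1) : ∃ γ : G →* ℂˣ, γ g ≠ 1 := by
  obtain ⟨φ, hφ⟩ :=
    CharacterModule.exists_character_apply_ne_zero_of_ne_zero (a := Additive.ofMul g) hg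
  refine ⟨MonoidHom.toAdditive.symm (AddCircle.ratExpUnits.comp φ), fun h => hφ ?_⟩
  exact AddCircle.injective_ratExpUnits.eq_iff' (map_zero _) |>.1 (congrArg Additive.ofMul h)

theorem Subgroup.mem_of_forall_le_ker {G : Type*} [CommGroup G] {H : Subgroup G} {g : G}
    (h : ∀ γ : G →* ℂˣ, H ≤ γ.ker → g ∈ γ.ker) : g ∈ H := by
  by_contra hg
  obtain ⟨γ, hγ⟩ := exists_monoidHom_units_complex_apply_ne_one
    (g := (g : G ⧸ H)) (by rwa [Ne, QuotientGroup.eq_one_iff])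
  exact hγ <| h (γ.comp (QuotientGroup.mk' H))
    fun x hx => by simp [(QuotientGroup.eq_one_iff x).2 hx]

theorem Units.eq_one_of_mem_zpowers_of_one_le_norm_of_norm_lt {𝕜 : Type*}
    [NormedDivisionRing 𝕜] {q c : 𝕜ˣ} (hc : c ∈ Subgroup.zpowers q)
    (h1 : 1 ≤ ‖(c : 𝕜)‖) (hq : ‖(c : 𝕜)‖ < ‖(q : 𝕜)‖) : c = 1 := by
  obtain ⟨n, rfl⟩ := hc
  have hq1 : 1 < ‖(q : 𝕜)‖ := h1.trans_lt hq
  rw [Units.val_zpow_eq_zpow_val, norm_zpow] at h1 hq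
  have hn0 : 0 ≤ n := (one_le_zpow_iff_right₀ hq1).1 h1
  have hn1 : n < 1 := (zpow_lt_zpow_iff_right₀ hq1).1 (by rwa [zpow_one])
  simp [show n = 0 by omega]

theorem Matrix.conj_diagonal_mulVec_eq_self_iff {n R : Type*} [Fintype n] [DecidableEq n]
    [CommRing R] {P : Matrix n n R} (hP : IsUnit P) (d : n → R) (X : n → R) :
    (P * diagonal d * P⁻¹) *ᵥ X = X ↔ ∀ i, d i * (P⁻¹ *ᵥ X) i = (P⁻¹ *ᵥ X) i := by
  set Y := P⁻¹ *ᵥ X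
  have hPd : IsUnit P.det := (isUnit_iff_isUnit_det P).1 hP
  have hX : P *ᵥ Y = X := by rw [mulVec_mulVec, mul_nonsing_inv P hPd, one_mulVec]
  have hconj : (P * diagonal d * P⁻¹) *ᵥ X = P *ᵥ (diagonal d *ᵥ Y) := by
    rw [mulVec_mulVec, mulVec_mulVec, Matrix.mul_assoc]
  rw [hconj, ← hX, (mulVec_injective_of_isUnit hP).eq_iff, funext_iff]
  simp only [mulVec_diagonal]

theorem semisimple_invariant_is_fixed_general (q : ℂˣ)
    (r : ℕ) (c : Fin r → ℂˣ)
    (hann : ∀ i, 1 ≤ ‖((c i : ℂ))‖ ∧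
      ‖((c i : ℂ))‖ < ‖(q : ℂ)‖)
    (P : Matrix (Fin r) (Fin r) ℂ) (hP : IsUnit P)
    (X : Fin r → ℂ)
    (h : ∀ γ : ℂˣ →* ℂˣ, γ q = 1 →
      (P * Matrix.diagonal (fun i => ((γ (c i) : ℂˣ) : ℂ)) * P⁻¹) *ᵥ X = X) :
    (P * Matrix.diagonal (fun i => ((c i : ℂˣ) : ℂ)) * P⁻¹) *ᵥ X = X := by
  simp only [conj_diagonal_mulVec_eq_self_iff hP] at h ⊢
  intro i
  by_cases hY : (P⁻¹ *ᵥ X) i = 0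
  · rw [hY, mul_zero]
  have hc : c i ∈ Subgroup.zpowers q := Subgroup.mem_of_forall_le_ker fun γ hγ =>
    Units.ext <| (mul_left_eq_self₀.1 <| h γ (Subgroup.zpowers_le.1 hγ) i).resolve_right hY
  rw [Units.eq_one_of_mem_zpowers_of_one_le_norm_of_norm_lt hc (hann i).1 (hann i).2,
    Units.val_one, one_mul]

/-- Semisimple part of Lemma 2.5: let `A = P diag(c₁,…,c_r) P⁻¹` be semisimple with all
eigenvalues `cᵢ` in the fundamental annulus `{1 ≤ |z| < |q|}`. If `γ(A) X = X` for every
group homomorphism `γ : ℂ* → ℂ*` with `γ(q) = 1` (where `γ(A) = P diag(γ(cᵢ)) P⁻¹`),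
then `A X = X`. -/
theorem semisimple_invariant_is_fixed (q : ℂˣ) (hq : 1 < ‖(q : ℂ)‖)
    (r : ℕ) (c : Fin r → ℂˣ)
    (hann : ∀ i, 1 ≤ ‖((c i : ℂ))‖ ∧
      ‖((c i : ℂ))‖ < ‖(q : ℂ)‖)
    (P : Matrix (Fin r) (Fin r) ℂ) (hP : IsUnit P)
    (X : Fin r → ℂ)
    (h : ∀ γ : ℂˣ →* ℂˣ, γ q = 1 →
      (P * Matrix.diagonal (fun i => ((γ (c i) : ℂˣ) : ℂ)) * P⁻¹) *ᵥ X = X) :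
    (P * Matrix.diagonal (fun i => ((c i : ℂˣ) : ℂ)) * P⁻¹) *ᵥ X = X :=
  semisimple_invariant_is_fixed_general q r c hann P hP X h
end
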